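/- (Replacement) If G and H have options indexed by the same set I, G ≅ {G'_i : i ∈ I}, H ≅ {H'_i : i ∈ I}, and G'_i = H'_i for all i (equality meaning identical outcomes in all sums), then G = H. -/

import Mathlib

/-!
The outcome of a game depends only on the set of outcomes of its options. The options of
`G + X` are the `g + X`, each matched by some `h + X` with the same outcome since `g = h`, and the
`G + x`, matched by `H + x` by induction on `X`; symmetrically for `H + X`. Hence `G + X` and
`H + X` have the same outcome for every `X`.
-/

inductive IGame : Type where
  | mk : List IGame → IGame

namespace IGame

def opts : IGame → List IGame
  | mk l => l

theorem sizeOf_lt_of_mem {g G : IGame} (h : g ∈ G.opts) : sizeOf g < sizeOf G := by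
  cases G with
  | mk l =>
    have h2 : g ∈ l := h
    have := List.sizeOf_lt_of_mem h2
    simp only [mk.sizeOf_spec]
    omega

def add : IGame → IGame → IGame
  | G, H =>
    mk ((G.opts.attach.map fun g => add g.1 H) ++ (H.opts.attach.map fun h => add G h.1))
termination_by G H => sizeOf G + sizeOf H
decreasing_by
  · have := sizeOf_lt_of_mem g.2; omega
  · have := sizeOf_lt_of_mem h.2; omega

inductive Player : Type where
  | N | O | P
  deriving DecidableEq

def out : IGame → Player → Prop
  | G, .N => ∃ g : {x // x ∈ G.opts}, out g.1 .P
  | G, .O => ∀ g : {x // x ∈ G.opts}, out g.1 .N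
  | G, .P => ∀ g : {x // x ∈ G.opts}, out g.1 .O
termination_by G _ => sizeOf G
decreasing_by
  all_goals exact sizeOf_lt_of_mem g.2

theorem out_N {G : IGame} : out G .N ↔ ∃ g ∈ G.opts, out g .P := by
  rw [out]
  exact ⟨fun ⟨g, h⟩ => ⟨g.1, g.2, h⟩, fun ⟨g, hm, h⟩ => ⟨⟨g, hm⟩, h⟩⟩

theorem out_O {G : IGame} : out G .O ↔ ∀ g ∈ G.opts, out g .N := by
  rw [out]
  exact ⟨fun h g hm => h ⟨g, hm⟩, fun h g => h g.1 g.2⟩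

theorem out_P {G : IGame} : out G .P ↔ ∀ g ∈ G.opts, out g .O := by
  rw [out]
  exact ⟨fun h g hm => h ⟨g, hm⟩, fun h g => h g.1 g.2⟩

def outcome (G : IGame) : Set Player := {p | out G p}

def nim : Nat → IGame
  | 0 => mk []
  | n+1 => mk ((nim n).opts ++ [nim n])

end IGame

theorem List.Forall₂.exists_of_mem_left {α β : Type*} {R : α → β → Prop} {l₁ : List α}
    {l₂ : List β} (h : List.Forall₂ R l₁ l₂) {a : α} (ha : a ∈ l₁) : ∃ b ∈ l₂, R a b := by
  induction h with
  | nil => cases ha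
  | @cons _ b _ _ hab _ ih =>
    rcases List.mem_cons.mp ha with rfl | ha
    · exact ⟨b, List.mem_cons_self, hab⟩
    · obtain ⟨c, hc, hac⟩ := ih ha
      exact ⟨c, List.mem_cons_of_mem _ hc, hac⟩

namespace IGame

/-- Equality of games: identical outcomes in all disjunctive sums. -/
def eqv (G H : IGame) : Prop :=
  ∀ X : IGame, outcome (add G X) = outcome (add H X)

theorem eqv_comm {G H : IGame} : eqv G H ↔ eqv H G :=
  ⟨fun h X => (h X).symm, fun h X => (h X).symm⟩

theorem mem_opts_add {y G X : IGame} :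
    y ∈ (add G X).opts ↔ (∃ g ∈ G.opts, y = add g X) ∨ ∃ x ∈ X.opts, y = add G x := by
  rw [add]
  simp only [opts, List.mem_append, List.mem_map, List.mem_attach, true_and,
    Subtype.exists, exists_prop, eq_comm (a := y)]

theorem outcome_eq_of_opts {G H : IGame}
    (hGH : ∀ g ∈ G.opts, ∃ h ∈ H.opts, outcome g = outcome h)
    (hHG : ∀ h ∈ H.opts, ∃ g ∈ G.opts, outcome g = outcome h) :
    outcome G = outcome H := by
  have hout {g h : IGame} (e : outcome g = outcome h) (p : Player) : out g p ↔ out h p :=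
    Set.ext_iff.mp e p
  have some_iff (q : Player) : (∃ g ∈ G.opts, out g q) ↔ ∃ h ∈ H.opts, out h q :=
    ⟨fun ⟨g, hg, hq⟩ => let ⟨h, hh, e⟩ := hGH g hg; ⟨h, hh, (hout e q).mp hq⟩,
      fun ⟨h, hh, hq⟩ => let ⟨g, hg, e⟩ := hHG h hh; ⟨g, hg, (hout e q).mpr hq⟩⟩
  have all_iff (q : Player) : (∀ g ∈ G.opts, out g q) ↔ ∀ h ∈ H.opts, out h q :=
    ⟨fun hG h hh => let ⟨g, hg, e⟩ := hHG h hh; (hout e q).mp (hG g hg),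
      fun hH g hg => let ⟨h, hh, e⟩ := hGH g hg; (hout e q).mpr (hH h hh)⟩
  ext p
  change out G p ↔ out H p
  cases p
  case N => rw [out_N, out_N]; exact some_iff _
  case O => rw [out_O, out_O]; exact all_iff _
  case P => rw [out_P, out_P]; exact all_iff _

theorem exists_mem_opts_add_outcome_eq {G H X : IGame}
    (hGH : ∀ g ∈ G.opts, ∃ h ∈ H.opts, eqv g h)
    (hX : ∀ x ∈ X.opts, outcome (add G x) = outcome (add H x)) :
    ∀ y ∈ (add G X).opts, ∃ z ∈ (add H X).opts, outcome y = outcome z := by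
  intro y hy
  rcases mem_opts_add.mp hy with ⟨g, hg, rfl⟩ | ⟨x, hx, rfl⟩
  · obtain ⟨h, hh, e⟩ := hGH g hg
    exact ⟨add h X, mem_opts_add.mpr (.inl ⟨h, hh, rfl⟩), e X⟩
  · exact ⟨add H x, mem_opts_add.mpr (.inr ⟨x, hx, rfl⟩), hX x hx⟩

theorem eqv_of_opts {G H : IGame} (hGH : ∀ g ∈ G.opts, ∃ h ∈ H.opts, eqv g h)
    (hHG : ∀ h ∈ H.opts, ∃ g ∈ G.opts, eqv h g) : eqv G H := by
  intro X
  have ih : ∀ x ∈ X.opts, outcome (add G x) = outcome (add H x) := fun x hx =>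
    have := sizeOf_lt_of_mem hx
    eqv_of_opts hGH hHG x
  refine outcome_eq_of_opts (exists_mem_opts_add_outcome_eq hGH ih) fun z hz => ?_
  obtain ⟨y, hy, e⟩ := exists_mem_opts_add_outcome_eq hHG (fun x hx => (ih x hx).symm) z hz
  exact ⟨y, hy, e.symm⟩
termination_by X => sizeOf X

/-- (Replacement) If the options of `G` and `H` correspond pairwise under
equality, then `G = H`. -/
theorem replacement (G H : IGame) (h : List.Forall₂ eqv G.opts H.opts) :
    eqv G H :=
  eqv_of_opts (fun _ => h.exists_of_mem_left)
    fun _ hh => (h.flip.imp fun _ _ => eqv_comm.mp).exists_of_mem_left hh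

end IGame
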